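/- If S, T ∈ B(Z) are commuting Drazin invertible operators on a complex Banach space Z, then ST is Drazin invertible. -/
import Mathlib

/-- If `b` is a Drazin inverse of `a` and `x` commutes with `a`, then `x` commutes with `b`. -/
theorem drazin_comm_aux {R : Type*} [Ring R] (a b x : R) (m : ℕ)
    (h1 : a ^ m = a ^ m * b * a) (h2 : b * a * b = b) (h3 : a * b = b * a)
    (hx : x * a = a * x) : x * b = b * x := by
  have cab : Commute a b := h3
  have cxa : Commute x a := hx
  cases m with
  | zero =>
    have hba : b * a = 1 := by simpa using h1.symm
    have hab : a * b = 1 := h3.trans hba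
    calc x * b = (b * a) * (x * b) := by rw [hba, one_mul]
      _ = b * ((x * a) * b) := by rw [mul_assoc, ← mul_assoc a x b, ← hx]
      _ = b * x := by rw [mul_assoc, hab, mul_one]
  | succ k =>
    set m := k + 1 with hm
    have hb2 : a * (b * b) = b := by rw [← mul_assoc, h3, h2]
    have he1 : a ^ m * (a * b) = a ^ m := by rw [h3, ← mul_assoc, ← h1]
    have he_idem : IsIdempotentElem (a * b) := by
      show (a * b) * (a * b) = a * b
      rw [mul_assoc, ← mul_assoc b a b, h2]
    have hfe : a ^ m * b ^ m = a * b := by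
      rw [← cab.mul_pow, hm, he_idem.pow_succ_eq]
    have hfe2 : a ^ (2 * m) * b ^ (2 * m) = a * b := by
      rw [← cab.mul_pow]
      rcases Nat.exists_eq_succ_of_ne_zero (by omega : 2 * m ≠ 0) with ⟨j, hj⟩
      rw [hj, he_idem.pow_succ_eq]
    have hbm : b ^ m = a ^ m * b ^ (2 * m) := by
      have hb' : b = a * b ^ 2 := by rw [sq, hb2]
      calc b ^ m = (a * b ^ 2) ^ m := by rw [← hb']
        _ = a ^ m * (b ^ 2) ^ m := (cab.pow_right 2).mul_pow m
        _ = a ^ m * b ^ (2 * m) := by rw [← pow_mul]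
    have cea : Commute (a * b) a := Commute.mul_left (Commute.refl a) cab.symm
    have hea : (a * b) * a ^ m = a ^ m := by rw [(cea.pow_right m).eq, he1]
    have hxam : x * a ^ m = a ^ m * x := (cxa.pow_right m).eq
    have hxam2 : x * a ^ (2 * m) = a ^ (2 * m) * x := (cxa.pow_right (2 * m)).eq
    have he1' : a ^ (2 * m) * (a * b) = a ^ (2 * m) := by
      rw [two_mul, pow_add, mul_assoc, he1]
    -- x e = e x e
    have hxe : x * (a * b) = (a * b) * (x * (a * b)) := by
      conv_lhs => rw [← hfe, ← mul_assoc, hxam, ← hea, mul_assoc (a * b) (a ^ m) x,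
        mul_assoc (a * b), ← hxam, mul_assoc x, hfe]
    -- e x = e x e
    have key : (a * b) = b ^ (2 * m) * a ^ (2 * m) := by
      rw [← hfe2, (cab.pow_pow (2 * m) (2 * m)).eq]
    have hex : (a * b) * x = (a * b) * (x * (a * b)) := by
      conv_lhs => rw [key, mul_assoc, ← hxam2, ← he1', ← mul_assoc x, hxam2,
        mul_assoc (a ^ (2 * m)) x, ← mul_assoc (b ^ (2 * m)), ← key]
    have hxe' : x * (a * b) = (a * b) * x := hxe.trans hex.symm
    have heb : (a * b) * b = b := by rw [mul_assoc, hb2]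
    have hbe : b * (a * b) = b := by rw [← mul_assoc, h2]
    have : b * x = x * b := by
      calc b * x = (b * (a * b)) * x := by rw [hbe]
        _ = b * ((a * b) * x) := by rw [mul_assoc b (a * b) x]
        _ = b * (x * (a * b)) := by rw [← hxe']
        _ = b * ((x * a) * b) := by rw [← mul_assoc x a b]
        _ = b * ((a * x) * b) := by rw [hx]
        _ = b * (a * (x * b)) := by rw [mul_assoc a x b]
        _ = (b * a) * (x * b) := by rw [← mul_assoc b a (x * b)]
        _ = (a * b) * (x * b) := by rw [← h3]
        _ = ((a * b) * x) * b := by rw [← mul_assoc (a * b) x b]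
        _ = (x * (a * b)) * b := by rw [← hxe']
        _ = x * ((a * b) * b) := by rw [mul_assoc x (a * b) b]
        _ = x * b := by rw [heb]
    exact this.symm

theorem drazin_pow_stab {R : Type*} [Monoid R] (a b : R) (m k : ℕ)
    (h : a ^ m = a ^ m * b * a) : a ^ (m + k) = a ^ (m + k) * b * a := by
  rw [add_comm m k, pow_add, mul_assoc, mul_assoc, ← mul_assoc (a ^ m), ← h]

/-- An operator `T` is Drazin invertible if there exist `S'` and `m` with
`T^m = T^m S' T`, `S' T S' = S'`, `T S' = S' T`. -/
def IsDrazinInvertible {R : Type*} [Monoid R] (T : R) : Prop :=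
  ∃ (S' : R) (m : ℕ), T ^ m = T ^ m * S' * T ∧ S' * T * S' = S' ∧ T * S' = S' * T

/-- The product of two commuting Drazin invertible operators on a complex Banach
space is Drazin invertible. -/
theorem mul_drazin_of_commute_drazin
    {Z : Type*} [NormedAddCommGroup Z] [NormedSpace ℂ Z] [CompleteSpace Z]
    (S T : Z →L[ℂ] Z) (hc : Commute S T)
    (hS : IsDrazinInvertible S) (hT : IsDrazinInvertible T) :
    IsDrazinInvertible (S * T) := by
  obtain ⟨p, m, h1S, h2S, h3S⟩ := hS
  obtain ⟨q, n, h1T, h2T, h3T⟩ := hT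
  have hTp : T * p = p * T := drazin_comm_aux S p T m h1S h2S h3S hc.symm.eq
  have hSq : S * q = q * S := drazin_comm_aux T q S n h1T h2T h3T hc.eq
  have hpq : p * q = q * p := drazin_comm_aux T q p n h1T h2T h3T hTp.symm
  have cSp : Commute S p := h3S
  have cSq : Commute S q := hSq
  have cTp : Commute T p := hTp
  have cTq : Commute T q := h3T
  have cpq : Commute p q := hpq
  refine ⟨p * q, m + n, ?_, ?_, ?_⟩
  · have h1S' : S ^ (m + n) = S ^ (m + n) * p * S := drazin_pow_stab S p m n h1S
    have h1T' : T ^ (m + n) = T ^ (m + n) * q * T := by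
      rw [add_comm m n]; exact drazin_pow_stab T q n m h1T
    calc (S * T) ^ (m + n) = S ^ (m + n) * T ^ (m + n) := hc.mul_pow (m + n)
      _ = (S ^ (m + n) * p * S) * (T ^ (m + n) * q * T) := by rw [← h1S', ← h1T']
      _ = ((S ^ (m + n) * p) * (T ^ (m + n) * q)) * (S * T) :=
            Commute.mul_mul_mul_comm ((hc.pow_right (m + n)).mul_right cSq)
              (S ^ (m + n) * p) T
      _ = ((S ^ (m + n) * T ^ (m + n)) * (p * q)) * (S * T) := by
            rw [Commute.mul_mul_mul_comm (cTp.pow_left (m + n)).symm (S ^ (m + n)) q]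
      _ = (S * T) ^ (m + n) * (p * q) * (S * T) := by rw [← hc.mul_pow]
  · calc p * q * (S * T) * (p * q)
        = ((p * S) * (q * T)) * (p * q) := by
            rw [Commute.mul_mul_mul_comm cSq.symm p T]
      _ = (p * S * p) * (q * T * q) :=
            Commute.mul_mul_mul_comm (Commute.mul_left cpq.symm cTp) (p * S) q
      _ = p * q := by rw [h2S, h2T]
  · exact ((cSp.mul_right cSq).mul_left (cTp.mul_right cTq)).eq
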